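/- Let A = [[0, X],[Y, Z]] and A' = [[0, X],[Y, Z']] be 2r × 2r integer block matrices with the same off-diagonal blocks X and Y but possibly different lower-right blocks Z and Z'. Then det(A - t·Aᵀ) = det(A' - t·A'ᵀ) as polynomials in t. -/
import Mathlib

open Polynomial Matrix

lemma det_fromBlocks_zero₁₁ {R : Type*} [CommRing R] {r : ℕ}
    (B C D : Matrix (Fin r) (Fin r) R) :
    (Matrix.fromBlocks (0 : Matrix (Fin r) (Fin r) R) B C D).det =
      (Matrix.fromBlocks (0 : Matrix (Fin r) (Fin r) R) (1 : Matrix (Fin r) (Fin r) R) (1 : Matrix (Fin r) (Fin r) R) (0 : Matrix (Fin r) (Fin r) R)).det * (C.det * B.det) := by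
  have h : Matrix.fromBlocks (0 : Matrix (Fin r) (Fin r) R) (1 : Matrix (Fin r) (Fin r) R) (1 : Matrix (Fin r) (Fin r) R) (0 : Matrix (Fin r) (Fin r) R) * Matrix.fromBlocks C D 0 B =
      Matrix.fromBlocks 0 B C D := by
    simp [Matrix.fromBlocks_multiply]
  rw [← h, Matrix.det_mul, Matrix.det_fromBlocks_zero₂₁]

theorem stmt_4 (r : ℕ) (X Y Z Z' : Matrix (Fin r) (Fin r) ℤ) :
    ((Matrix.fromBlocks 0 X Y Z).map (Polynomial.C) -
        (Polynomial.X : Polynomial ℤ) • ((Matrix.fromBlocks 0 X Y Z)ᵀ.map Polynomial.C)).det =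
      ((Matrix.fromBlocks 0 X Y Z').map (Polynomial.C) -
        (Polynomial.X : Polynomial ℤ) • ((Matrix.fromBlocks 0 X Y Z')ᵀ.map Polynomial.C)).det := by
  have key : ∀ W : Matrix (Fin r) (Fin r) ℤ,
      ((Matrix.fromBlocks 0 X Y W).map (Polynomial.C) -
        (Polynomial.X : Polynomial ℤ) • ((Matrix.fromBlocks 0 X Y W)ᵀ.map Polynomial.C)) =
      Matrix.fromBlocks 0 (X.map Polynomial.C - (Polynomial.X : Polynomial ℤ) • Yᵀ.map Polynomial.C)
        (Y.map Polynomial.C - (Polynomial.X : Polynomial ℤ) • Xᵀ.map Polynomial.C)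
        (W.map Polynomial.C - (Polynomial.X : Polynomial ℤ) • Wᵀ.map Polynomial.C) := by
    intro W
    rw [Matrix.fromBlocks_transpose, Matrix.fromBlocks_map, Matrix.fromBlocks_map,
      Matrix.fromBlocks_smul]
    ext i j
    cases i <;> cases j <;> simp [Matrix.fromBlocks]
  rw [key, key]
  exact (det_fromBlocks_zero₁₁ _ _ _).trans (det_fromBlocks_zero₁₁ _ _ _).symm
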